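/- arXiv:2207.03741 — 3 statements merged into one kernel-verified Lean document; each statement's English description precedes it below -/
import Mathlib

section
/- Pointwise Caccioppoli algebra inequality: Let p ∈ (1,∞). There exists a constant c = c(p) > 0 such that for all real numbers A, B with A ≥ B ≥ 0 and all σ, τ ≥ 0: (A − B)^{p−1} (A σ^p − B τ^p) ≥ (1/2) (A − B)^p (max{σ, τ})^p − c (max{A, B})^p |σ − τ|^p. -/
open Real

noncomputable section

lemma rpow_sub_one_mul_aux {x p : ℝ} (hx : 0 ≤ x) (hp : 1 < p) :
    x ^ (p - 1) * x = x ^ p := by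
  nth_rewrite 2 [show x = x ^ (1:ℝ) from (Real.rpow_one x).symm]
  rw [← Real.rpow_add' hx (by linarith)]
  congr 1
  ring

/-- Young-type inequality via case split. -/
lemma young_aux {p : ℝ} (hp : 1 < p) {ε X Y : ℝ} (hε : 0 < ε) (hX : 0 ≤ X) (hY : 0 ≤ Y) :
    X ^ (p - 1) * Y ≤ ε * X ^ p + ε ^ (1 - p) * Y ^ p := by
  have hp1 : (0:ℝ) ≤ p - 1 := by linarith
  have hεp : (0:ℝ) ≤ ε ^ (1 - p) := Real.rpow_nonneg hε.le _
  have hYp : (0:ℝ) ≤ Y ^ p := Real.rpow_nonneg hY _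
  have hXp : (0:ℝ) ≤ X ^ p := Real.rpow_nonneg hX _
  rcases le_or_gt Y (ε * X) with h | h
  · have h1 : X ^ (p - 1) * Y ≤ X ^ (p - 1) * (ε * X) :=
      mul_le_mul_of_nonneg_left h (Real.rpow_nonneg hX _)
    have h2 : X ^ (p - 1) * (ε * X) = ε * X ^ p := by
      rw [show X ^ (p-1) * (ε * X) = ε * (X ^ (p-1) * X) by ring,
        rpow_sub_one_mul_aux hX hp]
    nlinarith [mul_nonneg hεp hYp]
  · have hX' : X ≤ Y / ε := by
      rw [le_div_iff₀ hε]; nlinarith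
    have h1 : X ^ (p - 1) ≤ (Y / ε) ^ (p - 1) := Real.rpow_le_rpow hX hX' hp1
    have h2 : (Y / ε) ^ (p - 1) * Y = ε ^ (1 - p) * Y ^ p := by
      rw [Real.div_rpow hY hε.le, show (1:ℝ) - p = -(p - 1) by ring, Real.rpow_neg hε.le,
        div_mul_eq_mul_div, rpow_sub_one_mul_aux hY hp]
      ring
    have h3 := mul_le_mul_of_nonneg_right h1 hY
    nlinarith [mul_nonneg hε.le hXp]

/-- Bernoulli consequence: τ^p - σ^p ≤ p τ^(p-1) (τ - σ). -/
lemma bern_aux {p : ℝ} (hp : 1 < p) {σ τ : ℝ} (hσ : 0 ≤ σ) (hστ : σ ≤ τ) :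
    τ ^ p - σ ^ p ≤ p * τ ^ (p - 1) * (τ - σ) := by
  have hτ : 0 ≤ τ := hσ.trans hστ
  rcases eq_or_lt_of_le hτ with h0 | h0
  · have hσ0 : σ = 0 := le_antisymm (hστ.trans_eq h0.symm) hσ
    rw [← h0, hσ0, Real.zero_rpow (by linarith : p ≠ 0)]
    simp
  · have hτne : τ ≠ 0 := ne_of_gt h0
    have hs : (-1:ℝ) ≤ σ / τ - 1 := by
      have : 0 ≤ σ / τ := div_nonneg hσ h0.le
      linarith
    have hb := one_add_mul_self_le_rpow_one_add hs hp.le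
    rw [show (1:ℝ) + (σ / τ - 1) = σ / τ by ring, Real.div_rpow hσ h0.le] at hb
    have hτp : 0 < τ ^ p := Real.rpow_pos_of_pos h0 _
    have h1 : (1 + p * (σ / τ - 1)) * τ ^ p ≤ σ ^ p := (le_div_iff₀ hτp).mp hb
    have h2 : τ ^ (p - 1) * τ = τ ^ p := rpow_sub_one_mul_aux h0.le hp
    have h3 : (1 + p * (σ / τ - 1)) * τ ^ p
        = τ ^ p + p * (σ * τ ^ (p - 1)) - p * (τ ^ (p - 1) * τ) := by
      rw [← h2]
      field_simp
      ring
    rw [h3] at h1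
    linarith [h1, h2]

/-- Gap inequality: 3/4 τ^p - σ^p ≤ (3/4)/δ^p (τ-σ)^p with δ = 1 - (3/4)^(1/p). -/
lemma gap_aux {p : ℝ} (hp : 1 < p) {σ τ : ℝ} (hσ : 0 ≤ σ) (hστ : σ ≤ τ) :
    3 / 4 * τ ^ p - σ ^ p ≤ 3 / 4 / (1 - (3/4:ℝ) ^ p⁻¹) ^ p * (τ - σ) ^ p := by
  have hp0 : (0:ℝ) < p := by linarith
  have hτ : 0 ≤ τ := hσ.trans hστ
  set α : ℝ := (3/4:ℝ) ^ p⁻¹ with hαdef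
  have hα0 : 0 < α := Real.rpow_pos_of_pos (by norm_num) _
  have hα1 : α < 1 := Real.rpow_lt_one (by norm_num) (by norm_num) (by positivity)
  have hδ : 0 < 1 - α := by linarith
  have hδp : 0 < (1 - α) ^ p := Real.rpow_pos_of_pos hδ _
  have htp : 0 ≤ (τ - σ) ^ p := Real.rpow_nonneg (by linarith) _
  rcases le_or_gt (3 / 4 * τ ^ p) (σ ^ p) with h | h
  · have : 0 ≤ 3 / 4 / (1 - α) ^ p * (τ - σ) ^ p := by positivity
    linarith
  · have hαp : α ^ p = 3 / 4 := by
      rw [hαdef, ← Real.rpow_mul (by norm_num : (0:ℝ) ≤ 3/4),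
        inv_mul_cancel₀ (ne_of_gt hp0), Real.rpow_one]
    have hσα : σ < α * τ := by
      by_contra h'
      push_neg at h'
      have := Real.rpow_le_rpow (by positivity) h' hp0.le
      rw [Real.mul_rpow hα0.le hτ, hαp] at this
      linarith
    have hτle : τ ≤ (τ - σ) / (1 - α) := by
      rw [le_div_iff₀ hδ]
      nlinarith
    have h4 : τ ^ p ≤ (τ - σ) ^ p / (1 - α) ^ p := by
      have := Real.rpow_le_rpow hτ hτle hp0.le
      rwa [Real.div_rpow (by linarith) hδ.le] at this
    have hσp : 0 ≤ σ ^ p := Real.rpow_nonneg hσ _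
    have : 3 / 4 * τ ^ p ≤ 3 / 4 * ((τ - σ) ^ p / (1 - α) ^ p) := by linarith
    calc 3 / 4 * τ ^ p - σ ^ p ≤ 3 / 4 * ((τ - σ) ^ p / (1 - α) ^ p) := by linarith
      _ = 3 / 4 / (1 - α) ^ p * (τ - σ) ^ p := by ring

set_option maxHeartbeats 1000000 in
/-- **Pointwise Caccioppoli algebra inequality**: for p > 1 there is c = c(p) > 0 with
(A-B)^{p-1}(Aσ^p - Bτ^p) ≥ ½ (A-B)^p (max{σ,τ})^p - c (max{A,B})^p |σ-τ|^p
for all A ≥ B ≥ 0 and σ, τ ≥ 0. -/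
theorem pointwise_caccioppoli_algebra (p : ℝ) (hp : 1 < p) :
    ∃ c : ℝ, 0 < c ∧ ∀ A B σ τ : ℝ, B ≤ A → 0 ≤ B → 0 ≤ σ → 0 ≤ τ →
      (1 / 2) * (A - B) ^ p * max σ τ ^ p - c * max A B ^ p * |σ - τ| ^ p ≤
        (A - B) ^ (p - 1) * (A * σ ^ p - B * τ ^ p) := by
  have hp0 : (0:ℝ) < p := by linarith
  set ε : ℝ := 1 / (4 * p) with hεdef
  have hε : 0 < ε := by positivity
  set α : ℝ := (3/4:ℝ) ^ p⁻¹ with hαdef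
  have hα0 : 0 < α := Real.rpow_pos_of_pos (by norm_num) _
  have hα1 : α < 1 := Real.rpow_lt_one (by norm_num) (by norm_num) (by positivity)
  have hδ : 0 < 1 - α := by linarith
  have hc : 0 < p * ε ^ (1 - p) + 3 / 4 / (1 - α) ^ p := by positivity
  have hc0 : 0 ≤ p * ε ^ (1 - p) + 3 / 4 / (1 - α) ^ p := hc.le
  clear_value ε α
  refine ⟨p * ε ^ (1 - p) + 3 / 4 / (1 - α) ^ p, hc, ?_⟩
  intro A B σ τ hBA hB hσ hτ
  have hA : 0 ≤ A := hB.trans hBA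
  have hD : 0 ≤ A - B := by linarith
  rw [max_eq_left hBA]
  rcases eq_or_lt_of_le hD with hD0 | hD0
  · rw [← hD0, Real.zero_rpow (by linarith : p ≠ 0),
      Real.zero_rpow (by linarith : p - 1 ≠ 0)]
    have h1 : 0 ≤ (p * ε ^ (1 - p) + 3 / 4 / (1 - α) ^ p) * A ^ p * |σ - τ| ^ p :=
      mul_nonneg (mul_nonneg hc0 (Real.rpow_nonneg hA _)) (Real.rpow_nonneg (abs_nonneg _) _)
    nlinarith
  · have hDpow : (A - B) ^ (p - 1) * (A - B) = (A - B) ^ p :=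
      rpow_sub_one_mul_aux hD hp
    have hD1 : 0 ≤ (A - B) ^ (p - 1) := Real.rpow_nonneg hD _
    rcases le_or_gt τ σ with hcase | hcase
    · -- σ ≥ τ : easy case
      rw [max_eq_left hcase, abs_of_nonneg (by linarith : (0:ℝ) ≤ σ - τ)]
      have h1 : B * τ ^ p ≤ B * σ ^ p :=
        mul_le_mul_of_nonneg_left (Real.rpow_le_rpow hτ hcase hp0.le) hB
      have h2 : (A - B) ^ p * σ ^ p ≤ (A - B) ^ (p - 1) * (A * σ ^ p - B * τ ^ p) := by
        have h3 : (A - B) * σ ^ p ≤ A * σ ^ p - B * τ ^ p := by nlinarith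
        have h4 := mul_le_mul_of_nonneg_left h3 hD1
        calc (A - B) ^ p * σ ^ p = (A - B) ^ (p - 1) * ((A - B) * σ ^ p) := by
              rw [← hDpow]; ring
          _ ≤ (A - B) ^ (p - 1) * (A * σ ^ p - B * τ ^ p) := h4
      have h5 : 0 ≤ (p * ε ^ (1 - p) + 3 / 4 / (1 - α) ^ p) * A ^ p * (σ - τ) ^ p :=
        mul_nonneg (mul_nonneg hc0 (Real.rpow_nonneg hA _))
          (Real.rpow_nonneg (by linarith) _)
      have h6 : 0 ≤ (A - B) ^ p * σ ^ p :=
        mul_nonneg (Real.rpow_nonneg hD _) (Real.rpow_nonneg hσ _)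
      linarith
    · -- σ < τ : main case
      rw [max_eq_right hcase.le, abs_of_nonpos (by linarith : σ - τ ≤ 0), neg_sub]
      have ht0 : (0:ℝ) ≤ τ - σ := by linarith
      have hbern := bern_aux hp hσ hcase.le
      -- identity for the RHS
      have hID : (A - B) ^ (p - 1) * (A * σ ^ p - B * τ ^ p)
          = (A - B) ^ p * σ ^ p - (A - B) ^ (p - 1) * (B * (τ ^ p - σ ^ p)) := by
        rw [← hDpow]; ring
      -- chain 1 : bound the B-term
      have hchain1 : (A - B) ^ (p - 1) * (B * (τ ^ p - σ ^ p))
          ≤ p * ((A - B) ^ (p - 1) * τ ^ (p - 1) * (B * (τ - σ))) := by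
        have h1 : B * (τ ^ p - σ ^ p) ≤ B * (p * τ ^ (p - 1) * (τ - σ)) :=
          mul_le_mul_of_nonneg_left hbern hB
        have h2 := mul_le_mul_of_nonneg_left h1 hD1
        calc (A - B) ^ (p - 1) * (B * (τ ^ p - σ ^ p))
            ≤ (A - B) ^ (p - 1) * (B * (p * τ ^ (p - 1) * (τ - σ))) := h2
          _ = p * ((A - B) ^ (p - 1) * τ ^ (p - 1) * (B * (τ - σ))) := by ring
      -- Young
      have hyoung := young_aux hp hε (mul_nonneg hD hτ) (mul_nonneg hB ht0)
      rw [Real.mul_rpow hD hτ, Real.mul_rpow hD hτ, Real.mul_rpow hB ht0] at hyoung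
      have hyoung' := mul_le_mul_of_nonneg_left hyoung hp0.le
      have hpε : p * (ε * ((A - B) ^ p * τ ^ p)) = 1 / 4 * ((A - B) ^ p * τ ^ p) := by
        have hpe : p * ε = 1 / 4 := by
          rw [hεdef]; field_simp
        calc p * (ε * ((A - B) ^ p * τ ^ p)) = (p * ε) * ((A - B) ^ p * τ ^ p) := by ring
          _ = 1 / 4 * ((A - B) ^ p * τ ^ p) := by rw [hpe]
      -- B^p ≤ A^p, multiplied
      have hBAp : B ^ p ≤ A ^ p := Real.rpow_le_rpow hB hBA hp0.le
      have h5 : p * ε ^ (1 - p) * (B ^ p * (τ - σ) ^ p)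
          ≤ p * ε ^ (1 - p) * (A ^ p * (τ - σ) ^ p) :=
        mul_le_mul_of_nonneg_left
          (mul_le_mul_of_nonneg_right hBAp (Real.rpow_nonneg ht0 _))
          (mul_nonneg hp0.le (Real.rpow_nonneg hε.le _))
      -- gap inequality, multiplied by (A-B)^p ≤ A^p
      have hgapraw := gap_aux hp hσ hcase.le
      rw [← hαdef] at hgapraw
      have hDAp : (A - B) ^ p ≤ A ^ p := Real.rpow_le_rpow hD (by linarith) hp0.le
      have hgap : (A - B) ^ p * (3 / 4 * τ ^ p) - (A - B) ^ p * σ ^ p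
          ≤ 3 / 4 / (1 - α) ^ p * (A ^ p * (τ - σ) ^ p) := by
        rcases le_or_gt (3 / 4 * τ ^ p - σ ^ p) 0 with hneg | hpos
        · have h6 : (A - B) ^ p * (3 / 4 * τ ^ p - σ ^ p) ≤ 0 :=
            mul_nonpos_of_nonneg_of_nonpos (Real.rpow_nonneg hD _) hneg
          have h7 : 0 ≤ 3 / 4 / (1 - α) ^ p * (A ^ p * (τ - σ) ^ p) :=
            mul_nonneg (div_nonneg (by norm_num) (Real.rpow_nonneg hδ.le _))
              (mul_nonneg (Real.rpow_nonneg hA _) (Real.rpow_nonneg ht0 _))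
          nlinarith
        · have h6 : (A - B) ^ p * (3 / 4 * τ ^ p - σ ^ p)
              ≤ A ^ p * (3 / 4 / (1 - α) ^ p * (τ - σ) ^ p) := by
            calc (A - B) ^ p * (3 / 4 * τ ^ p - σ ^ p)
                ≤ A ^ p * (3 / 4 * τ ^ p - σ ^ p) :=
                  mul_le_mul_of_nonneg_right hDAp hpos.le
              _ ≤ A ^ p * (3 / 4 / (1 - α) ^ p * (τ - σ) ^ p) :=
                  mul_le_mul_of_nonneg_left hgapraw (Real.rpow_nonneg hA _)
          nlinarith
      linarith [hID, hchain1, hyoung', hpε, h5, hgap]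
end
end

section
/- Properties of the auxiliary function g: Let p ∈ (1,∞) and define g : (0,1) → ℝ by g(t) = (1 − t^{1−p})/(1 − t). Then: (i) g is increasing on (0,1); (ii) g(t) ≤ −(p − 1) for every t ∈ (0,1); (iii) g(t) ≤ −((p − 1)/2^p) · t^{1−p}/(1 − t) for every t ∈ (0, 1/2]. -/
/-!
`gAux p t` is the slope of the secant of the convex function `x ↦ x ^ (1 - p)` between `t` and `1`.
So (i) is the monotonicity of secant slopes of a convex function, and (ii) bounds such a slope by
the derivative `1 - p` at `1`. For (iii), `t ≤ 1/2` gives `t ^ (1 - p) ≥ 2 ^ (p - 1)`, and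
Bernoulli's inequality `p + 1 ≤ 2 ^ p` closes the estimate.
-/

open Real

noncomputable section

/-- The auxiliary function g(t) = (1 - t^{1-p})/(1 - t). -/
def gAux (p t : ℝ) : ℝ := (1 - t ^ (1 - p)) / (1 - t)

open Set

theorem convexOn_rpow_of_nonpos {q : ℝ} (hq : q ≤ 0) :
    ConvexOn ℝ (Ioi 0) fun x : ℝ ↦ x ^ q := by
  have hdiff : DifferentiableOn ℝ (fun x : ℝ ↦ x ^ q) (Ioi 0) :=
    (differentiableOn_rpow_const q).mono fun x hx ↦ (ne_of_gt hx : x ≠ 0)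
  refine MonotoneOn.convexOn_of_deriv (convex_Ioi 0) hdiff.continuousOn
    (by rwa [interior_Ioi]) ?_
  rw [interior_Ioi]
  intro x hx y _ hxy
  simp only [Real.deriv_rpow_const]
  exact mul_le_mul_of_nonpos_left (rpow_le_rpow_of_nonpos hx hxy (by linarith)) hq

theorem gAux_eq_slope (p : ℝ) : gAux p = slope (fun x : ℝ ↦ x ^ (1 - p)) 1 := by
  ext t
  rw [gAux, slope_def_field, one_rpow, ← neg_div_neg_eq, neg_sub, neg_sub]

theorem one_add_le_two_rpow {p : ℝ} (hp : 1 ≤ p) : p + 1 ≤ (2 : ℝ) ^ p := by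
  have h := one_add_mul_self_le_rpow_one_add (s := 1) (by norm_num) hp
  rwa [mul_one, add_comm, one_add_one_eq_two] at h

theorem one_sub_le_of_two_rpow_le {p s : ℝ} (hp : 1 ≤ p) (hs : (2 : ℝ) ^ (p - 1) ≤ s) :
    1 - s ≤ -((p - 1) / 2 ^ p) * s := by
  have h2p : (2 : ℝ) ^ p = 2 * 2 ^ (p - 1) := by
    rw [← rpow_one_add' zero_le_two (by linarith), add_sub_cancel]
  have hpos : (0 : ℝ) < 2 ^ (p - 1) := by positivity
  have hbern := one_add_le_two_rpow hp
  rw [h2p] at hbern ⊢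
  rw [neg_mul, le_neg, neg_sub, div_mul_eq_mul_div, div_le_iff₀ (by positivity)]
  nlinarith [mul_nonneg (sub_nonneg.2 hs) (by linarith : (0 : ℝ) ≤ 2 * 2 ^ (p - 1) - p + 1),
    mul_nonneg hpos.le (sub_nonneg.2 hbern)]

/-- **Properties of the auxiliary function g**: g is increasing on (0,1),
g ≤ -(p-1) on (0,1), and g(t) ≤ -((p-1)/2^p) t^{1-p}/(1-t) on (0,1/2]. -/
theorem gAux_properties (p : ℝ) (hp : 1 < p) :
    (∀ t₁ ∈ Set.Ioo (0 : ℝ) 1, ∀ t₂ ∈ Set.Ioo (0 : ℝ) 1, t₁ ≤ t₂ → gAux p t₁ ≤ gAux p t₂) ∧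
    (∀ t ∈ Set.Ioo (0 : ℝ) 1, gAux p t ≤ -(p - 1)) ∧
    (∀ t ∈ Set.Ioc (0 : ℝ) (1 / 2), gAux p t ≤ -((p - 1) / 2 ^ p) * (t ^ (1 - p) / (1 - t))) := by
  have hconv := convexOn_rpow_of_nonpos (q := 1 - p) (by linarith)
  have hIoo : Ioo (0 : ℝ) 1 ⊆ Ioi 0 \ {1} := fun t ht ↦ ⟨ht.1, ht.2.ne⟩
  refine ⟨fun t₁ h₁ t₂ h₂ h ↦ ?_, fun t ht ↦ ?_, fun t ht ↦ ?_⟩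
  · rw [gAux_eq_slope]
    exact hconv.slope_mono (mem_Ioi.2 one_pos) (hIoo h₁) (hIoo h₂) h
  · have hderiv : HasDerivAt (fun x : ℝ ↦ x ^ (1 - p)) (1 - p) 1 := by
      simpa using hasDerivAt_rpow_const (x := 1) (p := 1 - p) (Or.inl one_ne_zero)
    rw [gAux_eq_slope, slope_comm, neg_sub]
    exact hconv.slope_le_of_hasDerivAt ht.1 (mem_Ioi.2 one_pos) ht.2 hderiv
  · have h1t : 0 ≤ 1 - t := by linarith [ht.2]
    have hs : (2 : ℝ) ^ (p - 1) ≤ t ^ (1 - p) := by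
      calc (2 : ℝ) ^ (p - 1) = (1 / 2) ^ (1 - p) := by
            rw [one_div, inv_rpow zero_le_two, ← rpow_neg zero_le_two, neg_sub]
        _ ≤ t ^ (1 - p) := rpow_le_rpow_of_nonpos ht.1 ht.2 (by linarith)
    calc gAux p t = (1 - t ^ (1 - p)) / (1 - t) := rfl
      _ ≤ -((p - 1) / 2 ^ p) * t ^ (1 - p) / (1 - t) :=
        div_le_div_of_nonneg_right (one_sub_le_of_two_rpow_le hp.le hs) h1t
      _ = _ := mul_div_assoc _ _ _

end
end

section
/- Pointwise monotonicity inequality for truncations: Let p ∈ (1,∞). For all real numbers x, y with x ≥ y, every k ∈ ℝ, and all nonnegative real weights a, b ≥ 0: |x − y|^{p−2}(x − y) · ((x − k)₊ a − (y − k)₊ b) ≥ ((x − k)₊ − (y − k)₊)^{p−1} · ((x − k)₊ a − (y − k)₊ b), where (z)₊ = max{z, 0} denotes the positive part. -/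
open Real

noncomputable section

/-- **Pointwise monotonicity inequality for truncations**: for p > 1, x ≥ y, k ∈ ℝ and
weights a, b ≥ 0,
|x-y|^{p-2}(x-y)((x-k)₊ a - (y-k)₊ b) ≥ ((x-k)₊ - (y-k)₊)^{p-1}((x-k)₊ a - (y-k)₊ b). -/
theorem pointwise_truncation_monotonicity (p : ℝ) (hp : 1 < p) (x y k a b : ℝ)
    (hxy : y ≤ x) (ha : 0 ≤ a) (hb : 0 ≤ b) :
    (max (x - k) 0 - max (y - k) 0) ^ (p - 1) * (max (x - k) 0 * a - max (y - k) 0 * b) ≤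
      |x - y| ^ (p - 2) * (x - y) * (max (x - k) 0 * a - max (y - k) 0 * b) := by
  have hxy0 : (0:ℝ) ≤ x - y := by linarith
  have key : |x - y| ^ (p - 2) * (x - y) = (x - y) ^ (p - 1) := by
    rw [abs_of_nonneg hxy0]
    rcases eq_or_lt_of_le hxy0 with h | h
    · rw [← h, mul_zero, Real.zero_rpow (by linarith)]
    · rw [show p - 1 = (p - 2) + 1 by ring, Real.rpow_add h, Real.rpow_one]
  rw [key]
  by_cases hyk : 0 < y - k
  · have h1 : max (y - k) 0 = y - k := max_eq_left hyk.le
    have h2 : max (x - k) 0 = x - k := max_eq_left (by linarith)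
    rw [h1, h2, show x - k - (y - k) = x - y by ring]
  · push_neg at hyk
    have h1 : max (y - k) 0 = 0 := max_eq_right hyk
    rw [h1, zero_mul, sub_zero, sub_zero]
    have hX : max (x - k) 0 ≤ x - y := by
      rcases le_total (x - k) 0 with h | h
      · rw [max_eq_right h]; exact hxy0
      · rw [max_eq_left h]; linarith
    apply mul_le_mul_of_nonneg_right
    · exact Real.rpow_le_rpow (le_max_right _ _) hX (by linarith)
    · exact mul_nonneg (le_max_right _ _) ha
end
end
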